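/- For any positive integers n ≥ k ≥ 1, the absolute value |u(n,k)| of the central factorial number of the first kind of even indices equals the number of ordered pairs (σ, τ) of permutations of [n] = {1,…,n}, each with k cycles, such that min(σ) = min(τ). -/
import Mathlib

open Polynomial

/-- The central factorial numbers of the first kind of even indices `u n k = t (2n) (2k)`. -/
def u : ℕ → ℕ → ℤ
  | 0, 0 => 1
  | 0, _ + 1 => 0
  | _ + 1, 0 => 0
  | n + 1, k + 1 => u n k - (n : ℤ) ^ 2 * u n (k + 1)

/-- The set of cyclic minima of a permutation of `{1, …, n}` (modelled on `Fin n`);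
its cardinality is the number of cycles of the permutation. -/
def cycleMins {n : ℕ} (σ : Equiv.Perm (Fin n)) : Set (Fin n) :=
  {j | ∀ l : ℕ, j ≤ (σ ^ l) j}

namespace CM

def castSuccNeLast {n : ℕ} : Fin n ≃ {x : Fin (n + 1) // x ≠ Fin.last n} where
  toFun y := ⟨y.castSucc, (Fin.castSucc_lt_last y).ne⟩
  invFun x := x.1.castPred x.2
  left_inv y := by simp
  right_inv x := by simp

def extPerm {n : ℕ} (τ : Equiv.Perm (Fin n)) : Equiv.Perm (Fin (n + 1)) :=
  τ.extendDomain castSuccNeLast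

@[simp] lemma extPerm_castSucc {n : ℕ} (τ : Equiv.Perm (Fin n)) (y : Fin n) :
    extPerm τ y.castSucc = (τ y).castSucc :=
  τ.extendDomain_apply_image castSuccNeLast y

@[simp] lemma extPerm_last {n : ℕ} (τ : Equiv.Perm (Fin n)) :
    extPerm τ (Fin.last n) = Fin.last n :=
  τ.extendDomain_apply_not_subtype castSuccNeLast (by simp)

lemma extPerm_mul {n : ℕ} (σ τ : Equiv.Perm (Fin n)) :
    extPerm (σ * τ) = extPerm σ * extPerm τ := by
  ext x
  rcases eq_or_ne x (Fin.last n) with rfl | h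
  · simp [Equiv.Perm.mul_apply]
  · obtain ⟨y, rfl⟩ := Fin.exists_castSucc_eq.2 h
    simp [Equiv.Perm.mul_apply]

lemma extPerm_pow {n : ℕ} (τ : Equiv.Perm (Fin n)) (l : ℕ) :
    extPerm (τ ^ l) = (extPerm τ) ^ l := by
  induction l with
  | zero =>
    ext x
    rcases eq_or_ne x (Fin.last n) with rfl | h
    · simp
    · obtain ⟨y, rfl⟩ := Fin.exists_castSucc_eq.2 h
      simp
  | succ l ih => rw [pow_succ, pow_succ, extPerm_mul, ih]

lemma cycleMins_extPerm {n : ℕ} (τ : Equiv.Perm (Fin n)) :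
    cycleMins (extPerm τ) = Fin.castSucc '' cycleMins τ ∪ {Fin.last n} := by
  ext x
  rcases eq_or_ne x (Fin.last n) with rfl | h
  · simp only [Set.mem_union, Set.mem_singleton_iff, or_true, iff_true]
    intro l
    rw [← extPerm_pow]
    simp
  · obtain ⟨y, rfl⟩ := Fin.exists_castSucc_eq.2 h
    simp only [Set.mem_union, Set.mem_singleton_iff, h, or_false]
    constructor
    · intro hy
      refine ⟨y, fun l => ?_, rfl⟩
      have := hy l
      rw [← extPerm_pow, extPerm_castSucc, Fin.castSucc_le_castSucc_iff] at this
      exact this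
    · rintro ⟨z, hz, hzy⟩
      have : z = y := Fin.castSucc_injective n hzy
      subst this
      intro l
      rw [← extPerm_pow, extPerm_castSucc, Fin.castSucc_le_castSucc_iff]
      exact hz l

-- insertion of last after p
def ins {n : ℕ} (p : Fin n) (τ : Equiv.Perm (Fin n)) : Equiv.Perm (Fin (n + 1)) :=
  extPerm τ * Equiv.swap (Fin.last n) p.castSucc

lemma ins_castSucc_ne {n : ℕ} (p : Fin n) (τ : Equiv.Perm (Fin n)) {y : Fin n} (h : y ≠ p) :
    ins p τ y.castSucc = (τ y).castSucc := by
  rw [ins, Equiv.Perm.mul_apply,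
    Equiv.swap_apply_of_ne_of_ne (Fin.castSucc_lt_last y).ne (fun hc => h (Fin.castSucc_injective n hc)),
    extPerm_castSucc]

lemma ins_castSucc_self {n : ℕ} (p : Fin n) (τ : Equiv.Perm (Fin n)) :
    ins p τ p.castSucc = Fin.last n := by
  rw [ins, Equiv.Perm.mul_apply, Equiv.swap_apply_right, extPerm_last]

lemma ins_last {n : ℕ} (p : Fin n) (τ : Equiv.Perm (Fin n)) :
    ins p τ (Fin.last n) = (τ p).castSucc := by
  rw [ins, Equiv.Perm.mul_apply, Equiv.swap_apply_left, extPerm_castSucc]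

lemma ins_orbit {n : ℕ} (p : Fin n) (τ : Equiv.Perm (Fin n)) (y : Fin n) (l : ℕ) :
    (∃ m, ((ins p τ) ^ l) y.castSucc = ((τ ^ m) y).castSucc) ∨
      (((ins p τ) ^ l) y.castSucc = Fin.last n ∧ ∃ m, (τ ^ m) y = p) := by
  induction l with
  | zero => exact Or.inl ⟨0, by simp⟩
  | succ l ih =>
    rw [pow_succ', Equiv.Perm.mul_apply]
    rcases ih with ⟨m, hm⟩ | ⟨hl, m, hm⟩
    · rw [hm]
      rcases eq_or_ne ((τ ^ m) y) p with he | he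
      · exact Or.inr ⟨by rw [he, ins_castSucc_self], m, he⟩
      · refine Or.inl ⟨m + 1, ?_⟩
        rw [ins_castSucc_ne p τ he, pow_succ', Equiv.Perm.mul_apply]
    · rw [hl, ins_last]
      refine Or.inl ⟨m + 1, ?_⟩
      rw [pow_succ', Equiv.Perm.mul_apply, hm]

lemma ins_orbit_rev {n : ℕ} (p : Fin n) (τ : Equiv.Perm (Fin n)) (y : Fin n) (m : ℕ) :
    ∃ l, ((ins p τ) ^ l) y.castSucc = ((τ ^ m) y).castSucc := by
  induction m with
  | zero => exact ⟨0, by simp⟩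
  | succ m ih =>
    obtain ⟨l, hl⟩ := ih
    rcases eq_or_ne ((τ ^ m) y) p with he | he
    · refine ⟨l + 2, ?_⟩
      have h1 : ((ins p τ) ^ (l + 1)) y.castSucc = Fin.last n := by
        rw [pow_succ', Equiv.Perm.mul_apply, hl, he, ins_castSucc_self]
      rw [pow_succ', Equiv.Perm.mul_apply, h1, ins_last, pow_succ', Equiv.Perm.mul_apply, he]
    · refine ⟨l + 1, ?_⟩
      rw [pow_succ', Equiv.Perm.mul_apply, hl, ins_castSucc_ne p τ he, pow_succ',
        Equiv.Perm.mul_apply]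

lemma cycleMins_ins {n : ℕ} (p : Fin n) (τ : Equiv.Perm (Fin n)) :
    cycleMins (ins p τ) = Fin.castSucc '' cycleMins τ := by
  ext x
  rcases eq_or_ne x (Fin.last n) with rfl | h
  · have h1 : Fin.last n ∉ cycleMins (ins p τ) := by
      intro hx
      have := hx 1
      rw [pow_one, ins_last] at this
      exact absurd this (Fin.castSucc_lt_last (τ p)).not_ge
    have h2 : Fin.last n ∉ Fin.castSucc '' cycleMins τ := by
      rintro ⟨z, _, hz⟩
      exact (Fin.castSucc_lt_last z).ne hz
    simp [h1, h2]
  · obtain ⟨y, rfl⟩ := Fin.exists_castSucc_eq.2 h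
    constructor
    · intro hy
      refine ⟨y, fun m => ?_, rfl⟩
      obtain ⟨l, hl⟩ := ins_orbit_rev p τ y m
      have := hy l
      rw [hl, Fin.castSucc_le_castSucc_iff] at this
      exact this
    · rintro ⟨z, hz, hzy⟩
      obtain rfl : y = z := (Fin.castSucc_injective n hzy).symm
      intro l
      rcases ins_orbit p τ y l with ⟨m, hm⟩ | ⟨hl, -⟩
      · rw [hm, Fin.castSucc_le_castSucc_iff]
        exact hz m
      · rw [hl]
        exact Fin.le_last _

lemma extPerm_apply_ne_last {n : ℕ} (τ : Equiv.Perm (Fin n)) {x : Fin (n+1)} (h : x ≠ Fin.last n) :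
    extPerm τ x ≠ Fin.last n := by
  obtain ⟨y, rfl⟩ := Fin.exists_castSucc_eq.2 h
  rw [extPerm_castSucc]
  exact (Fin.castSucc_lt_last _).ne

-- a permutation fixing `last` restricts to `Fin n`
def res {n : ℕ} (σ : Equiv.Perm (Fin (n + 1))) (hσ : σ (Fin.last n) = Fin.last n) :
    Equiv.Perm (Fin n) where
  toFun y := (σ y.castSucc).castPred (fun hc => (Fin.castSucc_lt_last y).ne (σ.injective (hc.trans hσ.symm)))
  invFun y := (σ.symm y.castSucc).castPred (fun hc => (Fin.castSucc_lt_last y).ne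
    (by simpa [hσ] using congrArg σ hc))
  left_inv y := by
    apply Fin.castSucc_injective
    rw [Fin.castSucc_castPred, Fin.castSucc_castPred, Equiv.symm_apply_apply]
  right_inv y := by
    apply Fin.castSucc_injective
    rw [Fin.castSucc_castPred, Fin.castSucc_castPred, Equiv.apply_symm_apply]

lemma res_apply {n : ℕ} (σ : Equiv.Perm (Fin (n + 1))) (hσ : σ (Fin.last n) = Fin.last n)
    (y : Fin n) : (res σ hσ y).castSucc = σ y.castSucc := by
  simp only [res, Equiv.coe_fn_mk]
  exact Fin.castSucc_castPred _ _

lemma extPerm_res {n : ℕ} (σ : Equiv.Perm (Fin (n + 1))) (hσ : σ (Fin.last n) = Fin.last n) :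
    extPerm (res σ hσ) = σ := by
  ext x
  rcases eq_or_ne x (Fin.last n) with rfl | h
  · rw [extPerm_last, hσ]
  · obtain ⟨y, rfl⟩ := Fin.exists_castSucc_eq.2 h
    rw [extPerm_castSucc, res_apply]

lemma sigma'_fixes {n : ℕ} (σ : Equiv.Perm (Fin (n + 1))) :
    (σ * Equiv.swap (Fin.last n) (σ.symm (Fin.last n))) (Fin.last n) = Fin.last n := by
  rw [Equiv.Perm.mul_apply, Equiv.swap_apply_left, Equiv.apply_symm_apply]

noncomputable def dec {n : ℕ} : Equiv.Perm (Fin (n + 1)) ≃ Fin (n + 1) × Equiv.Perm (Fin n) where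
  toFun σ := (σ.symm (Fin.last n), res (σ * Equiv.swap (Fin.last n) (σ.symm (Fin.last n))) (sigma'_fixes σ))
  invFun pτ := extPerm pτ.2 * Equiv.swap (Fin.last n) pτ.1
  left_inv σ := by
    dsimp only
    rw [extPerm_res, mul_assoc, Equiv.swap_mul_self, mul_one]
  right_inv := by
    rintro ⟨p, τ⟩
    have hp : (extPerm τ * Equiv.swap (Fin.last n) p).symm (Fin.last n) = p := by
      rw [Equiv.Perm.mul_def, Equiv.symm_trans_apply]
      have : (extPerm τ).symm (Fin.last n) = Fin.last n := by
        rw [Equiv.symm_apply_eq]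
        exact (extPerm_last τ).symm
      rw [Equiv.symm_swap, this, Equiv.swap_apply_left]
    refine Prod.ext hp ?_
    apply Equiv.ext
    intro y
    apply Fin.castSucc_injective
    rw [res_apply]
    simp only [hp]
    rw [Equiv.Perm.mul_apply, Equiv.Perm.mul_apply, Equiv.swap_apply_self, extPerm_castSucc]

end CM

namespace CM

-- basic facts

lemma last_mem_cycleMins {n : ℕ} (σ : Equiv.Perm (Fin (n + 1))) :
    Fin.last n ∈ cycleMins σ ↔ σ (Fin.last n) = Fin.last n := by
  constructor
  · intro h
    exact le_antisymm (Fin.le_last _) (by simpa using h 1)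
  · intro h l
    have h2 : ∀ l : ℕ, (σ ^ l) (Fin.last n) = Fin.last n := by
      intro l
      induction l with
      | zero => simp
      | succ l ih => rw [pow_succ', Equiv.Perm.mul_apply, ih, h]
    rw [h2 l]


lemma zero_mem_cycleMins {n : ℕ} (σ : Equiv.Perm (Fin (n + 1))) :
    (0 : Fin (n + 1)) ∈ cycleMins σ := fun l => Fin.zero_le _

lemma card_cycleMins_le {n : ℕ} (σ : Equiv.Perm (Fin n)) :
    Nat.card (cycleMins σ) ≤ n := by
  rw [Nat.card_coe_set_eq]
  calc (cycleMins σ).ncard ≤ (Set.univ : Set (Fin n)).ncard :=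
        Set.ncard_le_ncard (Set.subset_univ _) Set.finite_univ
    _ = n := by rw [Set.ncard_univ, Nat.card_eq_fintype_card, Fintype.card_fin]

lemma card_image_castSucc {n : ℕ} (S : Set (Fin n)) :
    Nat.card (Fin.castSucc '' S : Set (Fin (n + 1))) = Nat.card S := by
  rw [Nat.card_coe_set_eq, Nat.card_coe_set_eq]
  exact Set.ncard_image_of_injective S (Fin.castSucc_injective n)

lemma last_notMem_image {n : ℕ} (S : Set (Fin n)) :
    Fin.last n ∉ Fin.castSucc '' S := by
  rintro ⟨z, -, hz⟩
  exact (Fin.castSucc_lt_last z).ne hz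

lemma card_image_castSucc_union {n : ℕ} (S : Set (Fin n)) :
    Nat.card ((Fin.castSucc '' S ∪ {Fin.last n}) : Set (Fin (n + 1))) = Nat.card S + 1 := by
  rw [Set.union_singleton, Nat.card_coe_set_eq,
    Set.ncard_insert_of_notMem (last_notMem_image S) (Set.toFinite _),
    ← Nat.card_coe_set_eq, card_image_castSucc]

lemma image_castSucc_inj {n : ℕ} {S T : Set (Fin n)}
    (h : Fin.castSucc '' S = Fin.castSucc '' T) : S = T :=
  Set.image_injective.2 (Fin.castSucc_injective n) h

lemma image_castSucc_union_inj {n : ℕ} {S T : Set (Fin n)}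
    (h : Fin.castSucc '' S ∪ {Fin.last n} = Fin.castSucc '' T ∪ {Fin.last n}) : S = T := by
  apply image_castSucc_inj (n := n)
  have : ∀ S : Set (Fin n),
      (Fin.castSucc '' S ∪ {Fin.last n}) \ {Fin.last n} = Fin.castSucc '' S := by
    intro S
    rw [Set.union_diff_distrib, Set.diff_self, Set.union_empty,
      Set.diff_singleton_eq_self (last_notMem_image S)]
  rw [← this S, ← this T, h]

end CM

namespace CM

lemma swap_last_self (n : ℕ) : Equiv.swap (Fin.last n) (Fin.last n) = 1 := by
  rw [Equiv.swap_self]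
  rfl

lemma dec_symm_last {n : ℕ} (τ : Equiv.Perm (Fin n)) :
    dec.symm (Fin.last n, τ) = extPerm τ := by
  show extPerm τ * Equiv.swap (Fin.last n) (Fin.last n) = extPerm τ
  rw [swap_last_self, mul_one]

lemma dec_symm_castSucc {n : ℕ} (p : Fin n) (τ : Equiv.Perm (Fin n)) :
    dec.symm (p.castSucc, τ) = ins p τ := rfl

lemma dec_fst {n : ℕ} (σ : Equiv.Perm (Fin (n + 1))) :
    (dec σ).1 = σ.symm (Fin.last n) := rfl

lemma dec_fst_of_fix {n : ℕ} {σ : Equiv.Perm (Fin (n + 1))} (hσ : σ (Fin.last n) = Fin.last n) :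
    (dec σ).1 = Fin.last n := by
  rw [dec_fst, Equiv.symm_apply_eq]
  exact hσ.symm

lemma extPerm_dec {n : ℕ} {σ : Equiv.Perm (Fin (n + 1))} (hσ : σ (Fin.last n) = Fin.last n) :
    extPerm ((dec σ).2) = σ := by
  have h1 : dec σ = (Fin.last n, (dec σ).2) := by
    rw [← dec_fst_of_fix hσ]
  conv_rhs => rw [← dec.symm_apply_apply σ, h1, dec_symm_last]

lemma dec_extPerm {n : ℕ} (τ : Equiv.Perm (Fin n)) :
    dec (extPerm τ) = (Fin.last n, τ) := by
  rw [← dec_symm_last, Equiv.apply_symm_apply]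

lemma dec_ins {n : ℕ} (p : Fin n) (τ : Equiv.Perm (Fin n)) :
    dec (ins p τ) = (p.castSucc, τ) := by
  rw [← dec_symm_castSucc, Equiv.apply_symm_apply]

lemma dec_fst_ne_last {n : ℕ} {σ : Equiv.Perm (Fin (n + 1))}
    (hσ : σ (Fin.last n) ≠ Fin.last n) : (dec σ).1 ≠ Fin.last n := by
  rw [dec_fst]
  intro hc
  exact hσ (by conv_lhs => rw [← hc, Equiv.apply_symm_apply])

lemma ins_dec {n : ℕ} {σ : Equiv.Perm (Fin (n + 1))} (hσ : σ (Fin.last n) ≠ Fin.last n) :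
    ins (((dec σ).1).castPred (dec_fst_ne_last hσ)) ((dec σ).2) = σ := by
  rw [← dec_symm_castSucc, Fin.castSucc_castPred]
  conv_rhs => rw [← dec.symm_apply_apply σ]

lemma cycleMins_of_fix {n : ℕ} {σ : Equiv.Perm (Fin (n + 1))}
    (hσ : σ (Fin.last n) = Fin.last n) :
    cycleMins σ = Fin.castSucc '' cycleMins ((dec σ).2) ∪ {Fin.last n} := by
  conv_lhs => rw [← extPerm_dec hσ]
  rw [cycleMins_extPerm]

lemma cycleMins_of_nfix {n : ℕ} {σ : Equiv.Perm (Fin (n + 1))}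
    (hσ : σ (Fin.last n) ≠ Fin.last n) :
    cycleMins σ = Fin.castSucc '' cycleMins ((dec σ).2) := by
  conv_lhs => rw [← ins_dec hσ]
  rw [cycleMins_ins]

lemma card_split {α : Type*} [Finite α] (P Q : α → Prop) :
    Nat.card {x // P x} = Nat.card {x // P x ∧ Q x} + Nat.card {x // P x ∧ ¬ Q x} := by
  classical
  rw [← Nat.card_sum]
  exact (Nat.card_congr (((Equiv.subtypeSubtypeEquivSubtypeInter P Q).symm.sumCongr
    (Equiv.subtypeSubtypeEquivSubtypeInter P (fun x => ¬ Q x)).symm).trans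
    (Equiv.sumCompl fun y : {x // P x} => Q y.1))).symm

end CM

namespace CM

def A (n k : ℕ) : Type :=
  {st : Equiv.Perm (Fin n) × Equiv.Perm (Fin n) //
    Nat.card (cycleMins st.1) = k ∧ Nat.card (cycleMins st.2) = k ∧
      cycleMins st.1 = cycleMins st.2}

instance (n k : ℕ) : Finite (A n k) := by
  unfold A
  infer_instance

noncomputable def N (n k : ℕ) : ℕ := Nat.card (A n k)

lemma nfix_snd {n : ℕ} {st : Equiv.Perm (Fin (n + 1)) × Equiv.Perm (Fin (n + 1))}
    (h3 : cycleMins st.1 = cycleMins st.2) (hQ : st.1 (Fin.last n) ≠ Fin.last n) :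
    st.2 (Fin.last n) ≠ Fin.last n := fun hc =>
  hQ ((last_mem_cycleMins st.1).1 (h3 ▸ (last_mem_cycleMins st.2).2 hc))

noncomputable def e1 (n k : ℕ) :
    {st : Equiv.Perm (Fin (n + 1)) × Equiv.Perm (Fin (n + 1)) //
      (Nat.card (cycleMins st.1) = k + 1 ∧ Nat.card (cycleMins st.2) = k + 1 ∧
        cycleMins st.1 = cycleMins st.2) ∧ st.1 (Fin.last n) = Fin.last n} ≃ A n k where
  toFun st := ⟨((dec st.1.1).2, (dec st.1.2).2), by
    obtain ⟨⟨h1, h2, h3⟩, hQ⟩ := st.2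
    have hQ2 : st.1.2 (Fin.last n) = Fin.last n :=
      (last_mem_cycleMins st.1.2).1 (h3 ▸ (last_mem_cycleMins st.1.1).2 hQ)
    rw [cycleMins_of_fix hQ, card_image_castSucc_union] at h1
    rw [cycleMins_of_fix hQ2, card_image_castSucc_union] at h2
    rw [cycleMins_of_fix hQ, cycleMins_of_fix hQ2] at h3
    exact ⟨Nat.succ_injective h1, Nat.succ_injective h2, image_castSucc_union_inj h3⟩⟩
  invFun ab := ⟨(extPerm ab.1.1, extPerm ab.1.2), by
    obtain ⟨h1, h2, h3⟩ := ab.2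
    refine ⟨⟨?_, ?_, ?_⟩, extPerm_last _⟩
    · rw [cycleMins_extPerm, card_image_castSucc_union, h1]
    · rw [cycleMins_extPerm, card_image_castSucc_union, h2]
    · rw [cycleMins_extPerm, cycleMins_extPerm, h3]⟩
  left_inv st := by
    obtain ⟨⟨h1, h2, h3⟩, hQ⟩ := st.2
    have hQ2 : st.1.2 (Fin.last n) = Fin.last n :=
      (last_mem_cycleMins st.1.2).1 (h3 ▸ (last_mem_cycleMins st.1.1).2 hQ)
    exact Subtype.ext (Prod.ext (extPerm_dec hQ) (extPerm_dec hQ2))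
  right_inv ab := by
    apply Subtype.ext
    apply Prod.ext
    · show (dec (extPerm ab.1.1)).2 = ab.1.1
      rw [dec_extPerm]
    · show (dec (extPerm ab.1.2)).2 = ab.1.2
      rw [dec_extPerm]

noncomputable def e2 (n k : ℕ) :
    {st : Equiv.Perm (Fin (n + 1)) × Equiv.Perm (Fin (n + 1)) //
      (Nat.card (cycleMins st.1) = k + 1 ∧ Nat.card (cycleMins st.2) = k + 1 ∧
        cycleMins st.1 = cycleMins st.2) ∧ ¬st.1 (Fin.last n) = Fin.last n} ≃
      (Fin n × Fin n) × A n (k + 1) where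
  toFun st := ((((dec st.1.1).1).castPred (dec_fst_ne_last st.2.2),
      ((dec st.1.2).1).castPred (dec_fst_ne_last (nfix_snd st.2.1.2.2 st.2.2))),
    ⟨((dec st.1.1).2, (dec st.1.2).2), by
      obtain ⟨⟨h1, h2, h3⟩, hQ⟩ := st.2
      have hQ2 := nfix_snd h3 hQ
      rw [cycleMins_of_nfix hQ, card_image_castSucc] at h1
      rw [cycleMins_of_nfix hQ2, card_image_castSucc] at h2
      rw [cycleMins_of_nfix hQ, cycleMins_of_nfix hQ2] at h3
      exact ⟨h1, h2, image_castSucc_inj h3⟩⟩)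
  invFun x := ⟨(ins x.1.1 x.2.1.1, ins x.1.2 x.2.1.2), by
    obtain ⟨h1, h2, h3⟩ := x.2.2
    refine ⟨⟨?_, ?_, ?_⟩, ?_⟩
    · rw [cycleMins_ins, card_image_castSucc, h1]
    · rw [cycleMins_ins, card_image_castSucc, h2]
    · rw [cycleMins_ins, cycleMins_ins, h3]
    · show ins x.1.1 x.2.1.1 (Fin.last n) ≠ Fin.last n
      rw [ins_last]
      exact (Fin.castSucc_lt_last _).ne⟩
  left_inv st := by
    exact Subtype.ext (Prod.ext (ins_dec st.2.2)
      (ins_dec (nfix_snd st.2.1.2.2 st.2.2)))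
  right_inv x := by
    obtain ⟨⟨p, q⟩, ⟨⟨σ', τ'⟩, hx⟩⟩ := x
    refine Prod.ext (Prod.ext ?_ ?_) (Subtype.ext (Prod.ext ?_ ?_))
    · apply Fin.castSucc_injective
      rw [Fin.castSucc_castPred]
      exact congrArg Prod.fst (dec_ins p σ')
    · apply Fin.castSucc_injective
      rw [Fin.castSucc_castPred]
      exact congrArg Prod.fst (dec_ins q τ')
    · show (dec (ins p σ')).2 = σ'
      rw [dec_ins]
    · show (dec (ins q τ')).2 = τ'
      rw [dec_ins]

end CM

namespace CM

lemma card_fin' (n : ℕ) : Nat.card (Fin n) = n := by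
  rw [Nat.card_eq_fintype_card, Fintype.card_fin]

lemma N_succ_succ (n k : ℕ) : N (n + 1) (k + 1) = N n k + n ^ 2 * N n (k + 1) := by
  have hs := card_split
    (fun st : Equiv.Perm (Fin (n + 1)) × Equiv.Perm (Fin (n + 1)) =>
      Nat.card (cycleMins st.1) = k + 1 ∧ Nat.card (cycleMins st.2) = k + 1 ∧
        cycleMins st.1 = cycleMins st.2)
    (fun st => st.1 (Fin.last n) = Fin.last n)
  have h1 := Nat.card_congr (e1 n k)
  have h2 := Nat.card_congr (e2 n k)
  rw [h1, h2, Nat.card_prod, Nat.card_prod, card_fin'] at hs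
  calc N (n + 1) (k + 1)
      = Nat.card {st : Equiv.Perm (Fin (n + 1)) × Equiv.Perm (Fin (n + 1)) //
          Nat.card (cycleMins st.1) = k + 1 ∧ Nat.card (cycleMins st.2) = k + 1 ∧
            cycleMins st.1 = cycleMins st.2} := rfl
    _ = Nat.card (A n k) + n * n * Nat.card (A n (k + 1)) := hs
    _ = N n k + n ^ 2 * N n (k + 1) := by rw [pow_two]; rfl
lemma N_zero_zero : N 0 0 = 1 := by
  haveI : Subsingleton (Equiv.Perm (Fin 0)) := ⟨fun a b => Equiv.ext fun x => x.elim0⟩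
  haveI : Unique (A 0 0) := {
    default := ⟨(1, 1), by
      haveI : IsEmpty (↥(cycleMins (1 : Equiv.Perm (Fin 0)))) := ⟨fun x => x.1.elim0⟩
      exact ⟨Nat.card_of_isEmpty, Nat.card_of_isEmpty, rfl⟩⟩
    uniq := fun a => Subtype.ext (Prod.ext (Subsingleton.elim _ _) (Subsingleton.elim _ _)) }
  exact Nat.card_unique

lemma N_succ_zero (n : ℕ) : N (n + 1) 0 = 0 := by
  haveI : IsEmpty (A (n + 1) 0) := ⟨fun st => by
    obtain ⟨⟨σ, τ⟩, h1, -, -⟩ := st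
    haveI : Nonempty (↥(cycleMins σ)) := ⟨⟨0, zero_mem_cycleMins σ⟩⟩
    exact absurd h1 Nat.card_pos.ne'⟩
  exact Nat.card_of_isEmpty

lemma N_of_lt {n k : ℕ} (h : n < k) : N n k = 0 := by
  haveI : IsEmpty (A n k) := ⟨fun st => by
    obtain ⟨⟨σ, τ⟩, h1, -, -⟩ := st
    exact absurd (h1 ▸ card_cycleMins_le σ) h.not_ge⟩
  exact Nat.card_of_isEmpty

/-- unsigned version of u -/
def v : ℕ → ℕ → ℕ
  | 0, 0 => 1
  | 0, _ + 1 => 0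
  | _ + 1, 0 => 0
  | n + 1, k + 1 => v n k + n ^ 2 * v n (k + 1)

lemma v_eq_N (n k : ℕ) : v n k = N n k := by
  induction n generalizing k with
  | zero =>
    match k with
    | 0 => rw [v, N_zero_zero]
    | k + 1 => rw [v, N_of_lt (Nat.succ_pos k)]
  | succ n ih =>
    match k with
    | 0 => rw [v, N_succ_zero]
    | k + 1 => rw [v, N_succ_succ, ih, ih]

lemma v_of_lt : ∀ {n k : ℕ}, n < k → v n k = 0 := by
  intro n
  induction n with
  | zero =>
    intro k h
    match k, h with
    | k + 1, _ => rw [v]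
  | succ n ih =>
    intro k h
    match k, h with
    | k + 1, h =>
      have hk : n < k := Nat.lt_of_succ_lt_succ h
      rw [v, ih hk, ih (hk.trans (Nat.lt_succ_self k)), mul_zero, add_zero]

lemma u_of_lt : ∀ {n k : ℕ}, n < k → u n k = 0 := by
  intro n
  induction n with
  | zero =>
    intro k h
    match k, h with
    | k + 1, _ => rw [u]
  | succ n ih =>
    intro k h
    match k, h with
    | k + 1, h =>
      have hk : n < k := Nat.lt_of_succ_lt_succ h
      rw [u, ih hk, ih (hk.trans (Nat.lt_succ_self k)), mul_zero, sub_zero]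

lemma u_eq_sign_v : ∀ n k : ℕ, k ≤ n → u n k = (-1 : ℤ) ^ (n - k) * (v n k : ℤ) := by
  intro n
  induction n with
  | zero =>
    intro k hk
    rw [Nat.le_zero.1 hk]
    simp [u, v]
  | succ n ih =>
    intro k hk
    match k with
    | 0 => simp [u, v]
    | k + 1 =>
      have hk' : k ≤ n := Nat.succ_le_succ_iff.1 hk
      rw [u, Nat.succ_sub_succ,
        show v (n + 1) (k + 1) = v n k + n ^ 2 * v n (k + 1) from rfl]
      rcases eq_or_lt_of_le hk' with rfl | hlt
      · rw [u_of_lt (Nat.lt_succ_self k), ih k le_rfl, Nat.sub_self,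
          v_of_lt (Nat.lt_succ_self k)]
        push_cast
        ring
      · rw [ih k hk', ih (k + 1) hlt]
        have he : n - k = (n - (k + 1)) + 1 := by omega
        rw [he]
        push_cast
        ring

end CM

/-- `|u n k|` is the number of ordered pairs `(σ, τ)` of permutations of `[n]`, each with
`k` cycles, having the same set of cyclic minima. -/
theorem stmt17 (n k : ℕ) (hk : 1 ≤ k) (hkn : k ≤ n) :
    (u n k).natAbs =
      Nat.card {st : Equiv.Perm (Fin n) × Equiv.Perm (Fin n) //
        Nat.card (cycleMins st.1) = k ∧ Nat.card (cycleMins st.2) = k ∧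
        cycleMins st.1 = cycleMins st.2} := by
  rw [CM.u_eq_sign_v n k hkn]
  rw [Int.natAbs_mul, Int.natAbs_pow]
  simp only [Int.natAbs_neg, Int.natAbs_one, one_pow, one_mul, Int.natAbs_natCast]
  rw [CM.v_eq_N]
  rfl
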